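/- arXiv:math/0502163 — 2 statements merged into one kernel-verified Lean document; each statement's English description precedes it below -/
import Mathlib

section
/- Let f : ℕ → ℤ[q^{±1}] satisfy a q-linear difference equation Σ_{j=0}^d a_j(q^n, q) f(n+j) = 0 for all n, where the a_j(u,v) are polynomials and a_d is a nonzero monomial (or invertible). Then there exists a constant C' such that for all n, the maximal q-degree of f(n) is at most C'(n+1)², i.e., maxdeg_q f(n) = O(n²). -/
open Finset LaurentPolynomial

noncomputable def substQ (p : MvPolynomial (Fin 2) ℚ) (n : ℕ) : LaurentPolynomial ℚ :=
  MvPolynomial.aeval ![LaurentPolynomial.T (n : ℤ), LaurentPolynomial.T 1] p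

noncomputable def toQ (f : LaurentPolynomial ℤ) : LaurentPolynomial ℚ :=
  AddMonoidAlgebra.ofCoeff (Finsupp.mapRange (Int.cast : ℤ → ℚ) (by simp) f.coeff)

/-!
Solving the recurrence for its last term gives
`f(n+d) = -(c q^N)⁻¹ · Σ_{j<d} a_j(q^n, q) f(n+j)` with `N = e₀ n + e₁ ≥ 0`, and
`a_j(q^n, q)` has maximal degree at most `A (n+1)`, where `A` bounds the total degrees of the
`a_j`. Hence the maximal degree grows by at most `A (n+1)` from one block of `d` consecutive
terms to the next, and a bound `C₀ + A n²` propagates by strong induction, since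
`(n+j)² + n + 1 ≤ (n+d)²` for `j < d`.
-/

namespace QHolonomic

def MaxDegLE {R : Type*} [Semiring R] (p : R[T;T⁻¹]) (M : ℤ) : Prop :=
  ∀ k ∈ p.coeff.support, k ≤ M

section Semiring

variable {R : Type*} [Semiring R]

lemma MaxDegLE.mono {p : R[T;T⁻¹]} {M N : ℤ} (h : MaxDegLE p M) (hMN : M ≤ N) :
    MaxDegLE p N :=
  fun k hk => (h k hk).trans hMN

lemma maxDegLE_C_mul_T (c : R) (m : ℤ) : MaxDegLE (C c * T m) m :=
  fun _ hk => (mem_singleton.1 (support_C_mul_T c m hk)).le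

lemma MaxDegLE.add {p q : R[T;T⁻¹]} {M : ℤ} (hp : MaxDegLE p M) (hq : MaxDegLE q M) :
    MaxDegLE (p + q) M := by
  intro k hk
  rw [AddMonoidAlgebra.coeff_add] at hk
  rcases mem_union.1 (Finsupp.support_add hk) with h | h
  exacts [hp k h, hq k h]

lemma MaxDegLE.mul {p q : R[T;T⁻¹]} {M N : ℤ} (hp : MaxDegLE p M) (hq : MaxDegLE q N) :
    MaxDegLE (p * q) (M + N) := by
  intro k hk
  obtain ⟨x, hx, y, hy, rfl⟩ := mem_add.1 (AddMonoidAlgebra.support_coeff_mul_subset p q hk)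
  exact add_le_add (hp x hx) (hq y hy)

lemma maxDegLE_sum {ι : Type*} (s : Finset ι) (F : ι → R[T;T⁻¹]) (M : ℤ)
    (h : ∀ i ∈ s, MaxDegLE (F i) M) : MaxDegLE (∑ i ∈ s, F i) M :=
  sum_induction F (MaxDegLE · M) (fun _ _ => MaxDegLE.add)
    (fun k hk => by simp at hk) h

lemma exists_maxDegLE_of_lt (g : ℕ → R[T;T⁻¹]) (d : ℕ) :
    ∃ C₀ : ℤ, 0 ≤ C₀ ∧ ∀ n < d, MaxDegLE (g n) C₀ := by
  obtain ⟨C₀, hC₀⟩ := (insert 0 ((range d).biUnion fun n => (g n).coeff.support)).exists_le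
  refine ⟨C₀, hC₀ 0 (mem_insert_self _ _), fun n hn k hk => hC₀ k ?_⟩
  exact mem_insert_of_mem (mem_biUnion.2 ⟨n, mem_range.2 hn, hk⟩)

theorem maxDegLE_quadratic (g : ℕ → R[T;T⁻¹]) (d : ℕ) (A C₀ : ℤ) (hA : 0 ≤ A)
    (hinit : ∀ n < d, MaxDegLE (g n) C₀)
    (hstep : ∀ (m : ℕ) (M : ℤ), (∀ j < d, MaxDegLE (g (m + j)) M) →
      MaxDegLE (g (m + d)) (M + A * (m + 1))) :
    ∀ n, MaxDegLE (g n) (C₀ + A * n ^ 2) := by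
  intro n
  induction n using Nat.strong_induction_on with
  | _ n ih =>
    rcases lt_or_ge n d with hn | hn
    · exact (hinit n hn).mono (by nlinarith)
    obtain ⟨m, rfl⟩ : ∃ m, n = m + d := ⟨n - d, by omega⟩
    have hbound := hstep m (C₀ + A * (((m : ℤ) + d) ^ 2 - (m + 1))) fun j hj =>
      (ih (m + j) (by omega)).mono <| by
        have hjd : (j : ℤ) + 1 ≤ d := by exact_mod_cast hj
        have : ((m : ℤ) + j) ^ 2 ≤ ((m : ℤ) + d) ^ 2 - (m + 1) := by nlinarith
        push_cast
        nlinarith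
    exact hbound.mono (by push_cast; linarith)

end Semiring

lemma MaxDegLE.neg {R : Type*} [Ring R] {p : R[T;T⁻¹]} {M : ℤ} (hp : MaxDegLE p M) :
    MaxDegLE (-p) M := by
  intro k hk
  rw [AddMonoidAlgebra.coeff_neg, Finsupp.support_neg] at hk
  exact hp k hk

lemma MaxDegLE.of_C_mul_T_mul_add_eq_zero {K : Type*} [Field K] {c : K} (hc : c ≠ 0)
    {N M : ℤ} {x s : K[T;T⁻¹]} (h : C c * T N * x + s = 0) (hs : MaxDegLE s M) :
    MaxDegLE x (M - N) := by
  have hx : x = C c⁻¹ * T (-N) * -s := by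
    rw [← eq_neg_of_add_eq_zero_left h, ← mul_assoc,
      show C c⁻¹ * T (-N) * (C c * T N) = C (c⁻¹ * c) * (T (-N) * T N) by rw [map_mul]; ring,
      ← T_add, neg_add_cancel, inv_mul_cancel₀ hc, map_one, T_zero, one_mul, one_mul]
  rw [hx, show M - N = -N + M by ring]
  exact (maxDegLE_C_mul_T _ _).mul hs.neg

lemma support_toQ (f : LaurentPolynomial ℤ) : (toQ f).coeff.support = f.coeff.support := by
  rw [toQ, AddMonoidAlgebra.coeff_ofCoeff,
    Finsupp.support_mapRange_of_injective Int.cast_zero _ Int.cast_injective]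

lemma substQ_monomial (e : Fin 2 →₀ ℕ) (c : ℚ) (n : ℕ) :
    substQ (MvPolynomial.monomial e c) n = C c * T (e 0 * n + e 1) := by
  rw [substQ, MvPolynomial.aeval_monomial, Finsupp.prod_fintype _ _ fun _ => pow_zero _,
    Fin.prod_univ_two]
  simp only [Matrix.cons_val_zero, Matrix.cons_val_one, T_pow, ← T_add]
  norm_num

lemma maxDegLE_substQ (p : MvPolynomial (Fin 2) ℚ) (n : ℕ) :
    MaxDegLE (substQ p n) (p.totalDegree * (n + 1)) := by
  conv => enter [1]; rw [p.as_sum]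
  rw [substQ, map_sum]
  refine maxDegLE_sum _ _ _ fun e he => ?_
  have hdeg : e 0 + e 1 ≤ p.totalDegree := by
    simpa [Finsupp.sum_fintype, Fin.sum_univ_two] using MvPolynomial.le_totalDegree he
  rw [← substQ, substQ_monomial]
  refine (maxDegLE_C_mul_T _ _).mono ?_
  have hdeg' : (e 0 : ℤ) + e 1 ≤ p.totalDegree := by exact_mod_cast hdeg
  nlinarith [(e 1).cast_nonneg (α := ℤ), n.cast_nonneg (α := ℤ)]

theorem maxDegLE_recurrence_step {d : ℕ} (a : Fin (d + 1) → MvPolynomial (Fin 2) ℚ) {A : ℕ}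
    (hA : ∀ j, (a j).totalDegree ≤ A) {c : ℚ} (hc : c ≠ 0) {e : Fin 2 →₀ ℕ}
    (hlast : a (Fin.last d) = MvPolynomial.monomial e c) (g : ℕ → ℚ[T;T⁻¹]) (m : ℕ)
    (hrec : ∑ j : Fin (d + 1), substQ (a j) m * g (m + j) = 0) (M : ℤ)
    (hM : ∀ j < d, MaxDegLE (g (m + j)) M) :
    MaxDegLE (g (m + d)) (M + A * (m + 1)) := by
  rw [Fin.sum_univ_castSucc, Fin.val_last, hlast, substQ_monomial, add_comm] at hrec
  have hsum : MaxDegLE (∑ j : Fin d, substQ (a j.castSucc) m * g (m + j)) (A * (m + 1) + M) :=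
    maxDegLE_sum _ _ _ fun j _ =>
      ((maxDegLE_substQ _ m).mono (by gcongr; exact_mod_cast hA _)).mul (hM j j.is_lt)
  refine (MaxDegLE.of_C_mul_T_mul_add_eq_zero hc hrec hsum).mono ?_
  have : (0 : ℤ) ≤ e 0 * m + e 1 := by positivity
  linarith

end QHolonomic

open QHolonomic

/-- If `f : ℕ → ℤ[q^{±1}]` is annihilated by a linear `q`-difference equation
`Σ_{j=0}^d a_j(q^n, q) f(n+j) = 0` whose leading coefficient `a_d` is a nonzero
monomial, then the maximal `q`-degree of `f(n)` grows at most quadratically. -/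
theorem maxdeg_qholonomic_quadratic
    (f : ℕ → LaurentPolynomial ℤ) (d : ℕ)
    (a : Fin (d + 1) → MvPolynomial (Fin 2) ℚ)
    (ha : ∃ (c : ℚ) (e : Fin 2 →₀ ℕ), c ≠ 0 ∧
      a (Fin.last d) = MvPolynomial.monomial e c)
    (hrec : ∀ n : ℕ, ∑ j : Fin (d + 1), substQ (a j) n * toQ (f (n + j)) = 0) :
    ∃ C' : ℝ, ∀ n : ℕ, ∀ k ∈ (f n).coeff.support, (k : ℝ) ≤ C' * (n + 1) ^ 2 := by
  obtain ⟨c, e, hc, hlast⟩ := ha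
  obtain ⟨C₀, hC₀, hinit⟩ := exists_maxDegLE_of_lt (toQ ∘ f) d
  obtain ⟨A, hA⟩ : ∃ A, ∀ j, (a j).totalDegree ≤ A :=
    ⟨univ.sup fun j => (a j).totalDegree,
      fun j => le_sup (f := fun j => (a j).totalDegree) (mem_univ j)⟩
  have hbound := maxDegLE_quadratic (toQ ∘ f) d A C₀ A.cast_nonneg hinit
    fun m M => maxDegLE_recurrence_step a hA hc hlast (toQ ∘ f) m (hrec m) M
  refine ⟨C₀ + A, fun n k hk => ?_⟩
  have hk : k ≤ C₀ + A * n ^ 2 := hbound n k (by rwa [Function.comp_apply, support_toQ])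
  have : C₀ + A * (n : ℤ) ^ 2 ≤ (C₀ + A) * (n + 1) ^ 2 := by
    nlinarith [n.cast_nonneg (α := ℤ)]
  exact_mod_cast hk.trans this
end

section
/- The number of partitions p(k) satisfies p(k) ≤ e^{π√(2k/3)} for all k ≥ 1 (up to a bounded multiplicative constant; in fact p(k) ≤ e^{π√(2k/3)} holds exactly). -/
/-!
For `0 ≤ x < 1`, recording a partition of `n` by the multiplicities of its parts shows
`p(n) xⁿ ≤ ∏_{m ≤ n} (1 - xᵐ)⁻¹`. Expanding `-log (1 - xᵐ) = ∑_k x^{mk} / k` and summing over `m`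
first, the logarithm of the product is at most `∑_k x^k / (k (1 - x^k)) ≤ x / (1 - x) · ∑_k 1 / k²
= π² / 6 · x / (1 - x)`. With `x = e^{-t}` this gives `p(n) ≤ exp (n t + π² / (6 t))`, and
`t = π / √(6 n)` gives the exponent `π √(2 n / 3)`.
-/

open Finset Real

namespace Nat.Partition

variable {n : ℕ}

def multiplicities (p : n.Partition) (i : Fin n) : ℕ := p.parts.count (i.val + 1)

lemma multiplicities_le (p : n.Partition) (i : Fin n) : p.multiplicities i ≤ n :=
  calc p.parts.count (i.val + 1) ≤ Multiset.card p.parts := Multiset.count_le_card _ _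
    _ = Multiset.card p.parts • 1 := (mul_one _).symm
    _ ≤ p.parts.sum := Multiset.card_nsmul_le_sum fun _ ha => p.parts_pos ha
    _ = n := p.parts_sum

lemma sum_mul_multiplicities (p : n.Partition) : ∑ i, (i.val + 1) * p.multiplicities i = n := by
  have h := (mem_finsuppAntidiag.1 p.toFinsuppAntidiag_mem_finsuppAntidiag).1
  rw [show Icc 1 n = Ico 1 (n + 1) from rfl, sum_Ico_eq_sum_range, add_tsub_cancel_right] at h
  refine (Fin.sum_univ_eq_sum_range (fun i => (i + 1) * p.parts.count (i + 1)) n).trans ?_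
  convert h using 2 with i
  rw [add_comm 1 i]
  exact mul_comm _ _

lemma multiplicities_injective : Function.Injective (multiplicities (n := n)) := by
  intro p q h
  ext a
  obtain ⟨i, rfl⟩ | ha : (∃ i : Fin n, a = i + 1) ∨ a ∉ p.parts ∧ a ∉ q.parts := by
    by_cases ha : 1 ≤ a ∧ a ≤ n
    · exact .inl ⟨⟨a - 1, by omega⟩, (Nat.sub_add_cancel ha.1).symm⟩
    · exact .inr ⟨fun h => ha ⟨p.parts_pos h, le_of_mem_parts h⟩,
        fun h => ha ⟨q.parts_pos h, le_of_mem_parts h⟩⟩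
  · exact congrFun h i
  · rw [Multiset.count_eq_zero_of_notMem ha.1, Multiset.count_eq_zero_of_notMem ha.2]

theorem card_mul_pow_le_prod_geom_sum {R : Type*} [CommSemiring R] [PartialOrder R]
    [IsOrderedRing R] (n : ℕ) {x : R} (hx : 0 ≤ x) :
    (Fintype.card n.Partition : R) * x ^ n ≤
      ∏ i : Fin n, ∑ j ∈ range (n + 1), (x ^ (i.val + 1)) ^ j := by
  classical
  rw [prod_univ_sum]
  calc (Fintype.card n.Partition : R) * x ^ n
      = ∑ p : n.Partition, ∏ i, (x ^ (i.val + 1)) ^ p.multiplicities i := by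
        simp only [← pow_mul, prod_pow_eq_pow_sum, sum_mul_multiplicities, sum_const,
          nsmul_eq_mul, Fintype.card]
    _ = ∑ g ∈ univ.image multiplicities, ∏ i : Fin n, (x ^ (i.val + 1)) ^ g i :=
        (sum_image (f := fun g => ∏ i : Fin n, (x ^ (i.val + 1)) ^ g i)
          fun p _ q _ h => multiplicities_injective h).symm
    _ ≤ ∑ g ∈ Fintype.piFinset fun _ => range (n + 1), ∏ i : Fin n, (x ^ (i.val + 1)) ^ g i := by
        refine sum_le_sum_of_subset_of_nonneg ?_ fun g _ _ => by positivity
        simpa [subset_iff, Nat.lt_succ_iff] using multiplicities_le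

end Nat.Partition

section OrderedField

variable {K : Type*} [Field K] [LinearOrder K] [IsStrictOrderedRing K]

lemma pow_succ_div_one_sub_pow_succ_le {x : K} (hx0 : 0 ≤ x) (hx1 : x < 1) (k : ℕ) :
    x ^ (k + 1) / (1 - x ^ (k + 1)) ≤ x / ((k + 1) * (1 - x)) := by
  have hxk : x ^ (k + 1) < 1 := pow_lt_one₀ hx0 hx1 (Nat.succ_ne_zero _)
  rw [div_le_div_iff₀ (sub_pos.2 hxk) (mul_pos (by positivity) (sub_pos.2 hx1))]
  have hgeom : (k + 1) * x ^ k ≤ ∑ i ∈ range (k + 1), x ^ i := by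
    simpa using card_nsmul_le_sum (range (k + 1)) (x ^ ·) (x ^ k) fun i hi =>
      pow_le_pow_of_le_one hx0 hx1.le (Nat.lt_succ_iff.1 (mem_range.1 hi))
  calc x ^ (k + 1) * ((k + 1) * (1 - x)) = x * ((1 - x) * ((k + 1) * x ^ k)) := by ring
    _ ≤ x * ((1 - x) * ∑ i ∈ range (k + 1), x ^ i) := by gcongr
    _ = x * (1 - x ^ (k + 1)) := by rw [mul_neg_geom_sum]

lemma sum_pow_succ_le {y : K} (hy0 : 0 ≤ y) (hy1 : y < 1) (n : ℕ) :
    ∑ i ∈ range n, y ^ (i + 1) ≤ y / (1 - y) := by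
  have := geom_sum_Ico_le_of_lt_one (m := 0) (n := n) hy0 hy1
  rw [← range_eq_Ico, pow_zero] at this
  calc ∑ i ∈ range n, y ^ (i + 1) = y * ∑ i ∈ range n, y ^ i := by simp_rw [pow_succ', mul_sum]
    _ ≤ y * (1 / (1 - y)) := by gcongr
    _ = y / (1 - y) := mul_one_div _ _

end OrderedField

lemma hasSum_one_div_succ_sq : HasSum (fun k : ℕ => 1 / ((k : ℝ) + 1) ^ 2) (π ^ 2 / 6) := by
  simpa using (hasSum_nat_add_iff' 1).2 hasSum_zeta_two

lemma sum_neg_log_one_sub_pow_le {x : ℝ} (hx0 : 0 ≤ x) (hx1 : x < 1) (n : ℕ) :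
    ∑ i : Fin n, -log (1 - x ^ (i.val + 1)) ≤ π ^ 2 / 6 * (x / (1 - x)) := by
  have hlog : HasSum (fun k : ℕ => ∑ i : Fin n, (x ^ (i.val + 1)) ^ (k + 1) / (k + 1))
      (∑ i : Fin n, -log (1 - x ^ (i.val + 1))) := by
    refine hasSum_sum fun i _ => hasSum_pow_div_log_of_abs_lt_one ?_
    rw [abs_of_nonneg (by positivity)]
    exact pow_lt_one₀ hx0 hx1 (Nat.succ_ne_zero _)
  rw [mul_comm]
  refine hasSum_le (fun k => ?_) hlog (hasSum_one_div_succ_sq.mul_left (x / (1 - x)))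
  calc ∑ i : Fin n, (x ^ (i.val + 1)) ^ (k + 1) / (k + 1)
      = (∑ i ∈ range n, (x ^ (k + 1)) ^ (i + 1)) / (k + 1) := by
        rw [← sum_div, Fin.sum_univ_eq_sum_range (fun i => (x ^ (i + 1)) ^ (k + 1))]
        simp_rw [pow_right_comm]
    _ ≤ x ^ (k + 1) / (1 - x ^ (k + 1)) / (k + 1) := by
        gcongr
        exact sum_pow_succ_le (by positivity) (pow_lt_one₀ hx0 hx1 (Nat.succ_ne_zero _)) n
    _ ≤ x / ((k + 1) * (1 - x)) / (k + 1) := by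
        gcongr ?_ / _
        exact pow_succ_div_one_sub_pow_succ_le hx0 hx1 k
    _ = x / (1 - x) * (1 / ((k : ℝ) + 1) ^ 2) := by
        field_simp

lemma prod_inv_one_sub_pow_le_exp {x : ℝ} (hx0 : 0 ≤ x) (hx1 : x < 1) (n : ℕ) :
    ∏ i : Fin n, (1 - x ^ (i.val + 1))⁻¹ ≤ exp (π ^ 2 / 6 * (x / (1 - x))) := by
  have hpos (i : Fin n) : 0 < 1 - x ^ (i.val + 1) := sub_pos.2 (pow_lt_one₀ hx0 hx1 (by omega))
  calc ∏ i : Fin n, (1 - x ^ (i.val + 1))⁻¹ = exp (∑ i : Fin n, -log (1 - x ^ (i.val + 1))) := by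
        simp_rw [exp_sum, exp_neg, exp_log (hpos _)]
    _ ≤ exp (π ^ 2 / 6 * (x / (1 - x))) := exp_le_exp.2 (sum_neg_log_one_sub_pow_le hx0 hx1 n)

lemma exp_neg_div_one_sub_exp_neg_le {t : ℝ} (ht : 0 < t) :
    exp (-t) / (1 - exp (-t)) ≤ 1 / t := by
  have h1 : exp (-t) < 1 := exp_lt_one_iff.2 (neg_lt_zero.2 ht)
  rw [div_le_div_iff₀ (sub_pos.2 h1) ht, one_mul]
  have : exp (-t) * (t + 1) ≤ 1 :=
    calc exp (-t) * (t + 1) ≤ exp (-t) * exp t := by gcongr; exact add_one_le_exp t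
      _ = 1 := by rw [← exp_add, neg_add_cancel, exp_zero]
  linarith

namespace Nat.Partition

theorem card_mul_pow_le_exp {x : ℝ} (hx0 : 0 ≤ x) (hx1 : x < 1) (n : ℕ) :
    (Fintype.card n.Partition : ℝ) * x ^ n ≤ exp (π ^ 2 / 6 * (x / (1 - x))) := by
  refine (card_mul_pow_le_prod_geom_sum n hx0).trans <|
    le_trans ?_ (prod_inv_one_sub_pow_le_exp hx0 hx1 n)
  gcongr with i
  have := geom_sum_Ico_le_of_lt_one (m := 0) (n := n + 1) (pow_nonneg hx0 (i.val + 1))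
    (pow_lt_one₀ hx0 hx1 (by omega))
  rwa [← range_eq_Ico, pow_zero, one_div] at this

theorem card_le_exp {t : ℝ} (ht : 0 < t) (n : ℕ) :
    (Fintype.card n.Partition : ℝ) ≤ exp (n * t + π ^ 2 / (6 * t)) := by
  have hx1 : exp (-t) < 1 := exp_lt_one_iff.2 (neg_lt_zero.2 ht)
  calc (Fintype.card n.Partition : ℝ)
      = Fintype.card n.Partition * exp (-t) ^ n * exp (n * t) := by
        rw [← exp_nat_mul, mul_assoc, ← exp_add]; simp
    _ ≤ exp (π ^ 2 / 6 * (exp (-t) / (1 - exp (-t)))) * exp (n * t) := by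
        gcongr; exact card_mul_pow_le_exp (exp_pos _).le hx1 n
    _ ≤ exp (π ^ 2 / 6 * (1 / t)) * exp (n * t) := by
        gcongr exp (_ * ?_) * _; exact exp_neg_div_one_sub_exp_neg_le ht
    _ = exp (n * t + π ^ 2 / (6 * t)) := by
        rw [← exp_add]; ring_nf

end Nat.Partition

theorem partition_bound (k : ℕ) (hk : 1 ≤ k) :
    (Fintype.card (Nat.Partition k) : ℝ) ≤ Real.exp (π * Real.sqrt (2 * k / 3)) := by
  have hs : 0 < √(6 * k) := sqrt_pos.2 (by positivity)
  have hs2 : √(6 * k) ^ 2 = 6 * k := sq_sqrt (by positivity)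
  -- `t = π / √(6k)` minimizes `k t + π² / (6 t)`; both terms then equal `π √(2k/3) / 2`.
  convert Nat.Partition.card_le_exp (div_pos pi_pos hs) k using 2
  rw [show (2 * k / 3 : ℝ) = (√(6 * k) / 3) ^ 2 by rw [div_pow, hs2]; ring, sqrt_sq (by positivity)]
  field_simp
  rw [hs2]
  ring
end
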